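/- The Jaccard distance d(A,B) = 1 − |A ∩ B|/|A ∪ B| (with d(∅,∅) = 0) satisfies the triangle inequality: for all finite sets A, B, C, d(A,C) ≤ d(A,B) + d(B,C). -/
import Mathlib


variable {α : Type*} [DecidableEq α]

/-- Jaccard distance: `1 - |A∩B|/|A∪B|`, with `d(∅,∅) = 0`. -/
noncomputable def jaccardDist (A B : Finset α) : ℝ :=
  if A ∪ B = ∅ then 0 else 1 - ((A ∩ B).card : ℝ) / ((A ∪ B).card : ℝ)

lemma jaccardDist_nonneg (A B : Finset α) : 0 ≤ jaccardDist A B := by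
  unfold jaccardDist
  split
  · exact le_refl 0
  · rename_i h
    have hle : (A ∩ B).card ≤ (A ∪ B).card :=
      Finset.card_le_card (fun u hu => Finset.mem_union_left _ (Finset.mem_of_mem_inter_left hu))
    have hpos : (0:ℝ) < ((A ∪ B).card : ℝ) := by
      have := Finset.card_pos.mpr (Finset.nonempty_of_ne_empty h)
      exact_mod_cast this
    have : ((A ∩ B).card : ℝ) / ((A ∪ B).card : ℝ) ≤ 1 := by
      rw [div_le_one hpos]; exact_mod_cast hle
    linarith

lemma jaccard_key (a b c x y z w : ℕ) :
    (x+w)*(b+c+x+y+z+w)*(a+c+x+y+z+w) + (z+w)*(a+b+x+y+z+w)*(a+c+x+y+z+w) ≤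
    (a+b+x+y+z+w)*(b+c+x+y+z+w)*(a+c+x+y+z+w) + (y+w)*(a+b+x+y+z+w)*(b+c+x+y+z+w) := by
  have h : (a+b+x+y+z+w)*(b+c+x+y+z+w)*(a+c+x+y+z+w) + (y+w)*(a+b+x+y+z+w)*(b+c+x+y+z+w)
      = (x+w)*(b+c+x+y+z+w)*(a+c+x+y+z+w) + (z+w)*(a+b+x+y+z+w)*(a+c+x+y+z+w) +
      (2*y*w^2 + 4*y*z*w + 2*y*z^2 + 4*y^2*w + 4*y^2*z + 2*y^3 + 4*x*y*w + 4*x*y*z + 4*x*y^2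
        + 2*x^2*y + c*z*w + c*z^2 + 3*c*y*w + 4*c*y*z + 3*c*y^2 + c*x*z + 3*c*x*y + c^2*z
        + c^2*y + 2*b*w^2 + 3*b*z*w + b*z^2 + 6*b*y*w + 5*b*y*z + 4*b*y^2 + 3*b*x*w + 2*b*x*z
        + 5*b*x*y + b*x^2 + 2*b*c*w + 2*b*c*z + 4*b*c*y + 2*b*c*x + b*c^2 + 2*b^2*w + b^2*z
        + 2*b^2*y + b^2*x + b^2*c + 3*a*y*w + 3*a*y*z + 3*a*y^2 + a*x*w + a*x*z + 4*a*x*y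
        + a*x^2 + 2*a*c*w + 2*a*c*z + 4*a*c*y + 2*a*c*x + a*c^2 + 2*a*b*w + 2*a*b*z + 4*a*b*y
        + 2*a*b*x + 2*a*b*c + a*b^2 + a^2*y + a^2*x + a^2*c + a^2*b) := by ring
  rw [h]
  exact Nat.le_add_right _ _

set_option maxHeartbeats 1000000 in
/-- The Jaccard distance satisfies the triangle inequality. -/
theorem jaccardDist_triangle (A B C : Finset α) :
    jaccardDist A C ≤ jaccardDist A B + jaccardDist B C := by
  classical
  by_cases hAC : A ∪ C = ∅
  · have h1 : jaccardDist A C = 0 := by unfold jaccardDist; simp [hAC]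
    rw [h1]
    exact add_nonneg (jaccardDist_nonneg A B) (jaccardDist_nonneg B C)
  by_cases hAB : A ∪ B = ∅
  · -- A = ∅, B = ∅, C ≠ ∅
    have hA : A = ∅ := (Finset.union_eq_empty.mp hAB).1
    have hB : B = ∅ := (Finset.union_eq_empty.mp hAB).2
    subst hA; subst hB
    simp only [jaccardDist, Finset.empty_union, Finset.empty_inter, Finset.card_empty]
    simp [hAC]
  by_cases hBC : B ∪ C = ∅
  · have hB : B = ∅ := (Finset.union_eq_empty.mp hBC).1
    have hC : C = ∅ := (Finset.union_eq_empty.mp hBC).2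
    subst hB; subst hC
    simp only [jaccardDist, Finset.union_empty, Finset.inter_empty, Finset.card_empty]
    simp [hAC]
  -- main case
  set U := A ∪ B ∪ C with hU
  have hsub : ∀ S : Finset α, S ⊆ U → S.card = ∑ u ∈ U, if u ∈ S then 1 else 0 := by
    intro S hS
    have h : U.filter (· ∈ S) = S := by
      ext u
      simp only [Finset.mem_filter]
      exact ⟨fun h => h.2, fun h => ⟨hS h, h⟩⟩
    have h2 := Finset.card_filter (· ∈ S) U
    rw [h] at h2
    exact h2
  set a := (A \ (B ∪ C)).card with ha
  set b := (B \ (A ∪ C)).card with hb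
  set c := (C \ (A ∪ B)).card with hc
  set x := ((A ∩ B) \ C).card with hx
  set y := ((A ∩ C) \ B).card with hy
  set z := ((B ∩ C) \ A).card with hz
  set w := (A ∩ B ∩ C).card with hw
  have sA : A ⊆ U := fun u hu => by simp [hU, Finset.mem_union]; tauto
  have sB : B ⊆ U := fun u hu => by simp [hU, Finset.mem_union]; tauto
  have sC : C ⊆ U := fun u hu => by simp [hU, Finset.mem_union]; tauto
  have s1 : A ∪ B ⊆ U := Finset.union_subset sA sB
  have s2 : B ∪ C ⊆ U := Finset.union_subset sB sC
  have s3 : A ∪ C ⊆ U := Finset.union_subset sA sC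
  have s4 : A ∩ B ⊆ U := fun u hu => sA (Finset.mem_of_mem_inter_left hu)
  have s5 : B ∩ C ⊆ U := fun u hu => sB (Finset.mem_of_mem_inter_left hu)
  have s6 : A ∩ C ⊆ U := fun u hu => sA (Finset.mem_of_mem_inter_left hu)
  have sa : A \ (B ∪ C) ⊆ U := fun u hu => sA (Finset.mem_sdiff.mp hu).1
  have sb : B \ (A ∪ C) ⊆ U := fun u hu => sB (Finset.mem_sdiff.mp hu).1
  have sc : C \ (A ∪ B) ⊆ U := fun u hu => sC (Finset.mem_sdiff.mp hu).1
  have sx : (A ∩ B) \ C ⊆ U := fun u hu => s4 (Finset.mem_sdiff.mp hu).1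
  have sy : (A ∩ C) \ B ⊆ U := fun u hu => s6 (Finset.mem_sdiff.mp hu).1
  have sz : (B ∩ C) \ A ⊆ U := fun u hu => s5 (Finset.mem_sdiff.mp hu).1
  have sw : A ∩ B ∩ C ⊆ U := fun u hu => s4 (Finset.mem_of_mem_inter_left hu)
  have h1 : (A ∪ B).card = a + b + x + y + z + w := by
    rw [hsub _ s1, ha, hb, hx, hy, hz, hw, hsub _ sa, hsub _ sb, hsub _ sx, hsub _ sy,
      hsub _ sz, hsub _ sw, ← Finset.sum_add_distrib, ← Finset.sum_add_distrib,
      ← Finset.sum_add_distrib, ← Finset.sum_add_distrib, ← Finset.sum_add_distrib]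
    refine Finset.sum_congr rfl fun u _ => ?_
    by_cases hA : u ∈ A <;> by_cases hB : u ∈ B <;> by_cases hC : u ∈ C <;>
      simp [Finset.mem_union, Finset.mem_sdiff, Finset.mem_inter, hA, hB, hC]
  have h2 : (B ∪ C).card = b + c + x + y + z + w := by
    rw [hsub _ s2, hb, hc, hx, hy, hz, hw, hsub _ sb, hsub _ sc, hsub _ sx, hsub _ sy,
      hsub _ sz, hsub _ sw, ← Finset.sum_add_distrib, ← Finset.sum_add_distrib,
      ← Finset.sum_add_distrib, ← Finset.sum_add_distrib, ← Finset.sum_add_distrib]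
    refine Finset.sum_congr rfl fun u _ => ?_
    by_cases hA : u ∈ A <;> by_cases hB : u ∈ B <;> by_cases hC : u ∈ C <;>
      simp [Finset.mem_union, Finset.mem_sdiff, Finset.mem_inter, hA, hB, hC]
  have h3 : (A ∪ C).card = a + c + x + y + z + w := by
    rw [hsub _ s3, ha, hc, hx, hy, hz, hw, hsub _ sa, hsub _ sc, hsub _ sx, hsub _ sy,
      hsub _ sz, hsub _ sw, ← Finset.sum_add_distrib, ← Finset.sum_add_distrib,
      ← Finset.sum_add_distrib, ← Finset.sum_add_distrib, ← Finset.sum_add_distrib]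
    refine Finset.sum_congr rfl fun u _ => ?_
    by_cases hA : u ∈ A <;> by_cases hB : u ∈ B <;> by_cases hC : u ∈ C <;>
      simp [Finset.mem_union, Finset.mem_sdiff, Finset.mem_inter, hA, hB, hC]
  have h4 : (A ∩ B).card = x + w := by
    rw [hsub _ s4, hx, hw, hsub _ sx, hsub _ sw, ← Finset.sum_add_distrib]
    refine Finset.sum_congr rfl fun u _ => ?_
    by_cases hA : u ∈ A <;> by_cases hB : u ∈ B <;> by_cases hC : u ∈ C <;>
      simp [Finset.mem_sdiff, Finset.mem_inter, hA, hB, hC]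
  have h5 : (B ∩ C).card = z + w := by
    rw [hsub _ s5, hz, hw, hsub _ sz, hsub _ sw, ← Finset.sum_add_distrib]
    refine Finset.sum_congr rfl fun u _ => ?_
    by_cases hA : u ∈ A <;> by_cases hB : u ∈ B <;> by_cases hC : u ∈ C <;>
      simp [Finset.mem_sdiff, Finset.mem_inter, hA, hB, hC]
  have h6 : (A ∩ C).card = y + w := by
    rw [hsub _ s6, hy, hw, hsub _ sy, hsub _ sw, ← Finset.sum_add_distrib]
    refine Finset.sum_congr rfl fun u _ => ?_
    by_cases hA : u ∈ A <;> by_cases hB : u ∈ B <;> by_cases hC : u ∈ C <;>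
      simp [Finset.mem_sdiff, Finset.mem_inter, hA, hB, hC]
  have pAB : (0:ℝ) < ((A ∪ B).card : ℝ) := by
    exact_mod_cast Finset.card_pos.mpr (Finset.nonempty_of_ne_empty hAB)
  have pBC : (0:ℝ) < ((B ∪ C).card : ℝ) := by
    exact_mod_cast Finset.card_pos.mpr (Finset.nonempty_of_ne_empty hBC)
  have pAC : (0:ℝ) < ((A ∪ C).card : ℝ) := by
    exact_mod_cast Finset.card_pos.mpr (Finset.nonempty_of_ne_empty hAC)
  unfold jaccardDist
  rw [if_neg hAC, if_neg hAB, if_neg hBC]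
  rw [h1, h2, h3, h4, h5, h6] at *
  have key := jaccard_key a b c x y z w
  have keyR : ((x+w:ℕ):ℝ)*((b+c+x+y+z+w:ℕ):ℝ)*((a+c+x+y+z+w:ℕ):ℝ)
      + ((z+w:ℕ):ℝ)*((a+b+x+y+z+w:ℕ):ℝ)*((a+c+x+y+z+w:ℕ):ℝ) ≤
      ((a+b+x+y+z+w:ℕ):ℝ)*((b+c+x+y+z+w:ℕ):ℝ)*((a+c+x+y+z+w:ℕ):ℝ)
      + ((y+w:ℕ):ℝ)*((a+b+x+y+z+w:ℕ):ℝ)*((b+c+x+y+z+w:ℕ):ℝ) := by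
    exact_mod_cast key
  have hfin : ((x+w:ℕ):ℝ)/((a+b+x+y+z+w:ℕ):ℝ) + ((z+w:ℕ):ℝ)/((b+c+x+y+z+w:ℕ):ℝ) ≤
      1 + ((y+w:ℕ):ℝ)/((a+c+x+y+z+w:ℕ):ℝ) := by
    have e1 : (1:ℝ) + ((y+w:ℕ):ℝ)/((a+c+x+y+z+w:ℕ):ℝ)
        = (((a+c+x+y+z+w:ℕ):ℝ) + ((y+w:ℕ):ℝ))/((a+c+x+y+z+w:ℕ):ℝ) := by
      rw [add_div, div_self (ne_of_gt pAC), add_comm]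
    rw [e1, div_add_div _ _ (ne_of_gt pAB) (ne_of_gt pBC),
      div_le_div_iff₀ (by positivity) pAC]
    nlinarith [keyR]
  linarith [hfin]
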